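/- arXiv:2212.05237 — 8 statements merged into one kernel-verified Lean document; each statement's English description precedes it below -/
import Mathlib

section
/- Let (δ_m)_{m≥1} be a sequence of nonnegative reals with δ_1 ≤ 1/(1-γ) where 0 ≤ γ < 1, c > 0, and δ_{m+1} ≤ δ_m - c·δ_m² for all m ≥ 1. Then ∑_{m=1}^M δ_m ≤ √(M/(c·(1-γ))). -/
theorem stmt_2 (γ c : ℝ) (δ : ℕ → ℝ)
    (hγ0 : 0 ≤ γ) (hγ1 : γ < 1)
    (hc0 : 0 < c)
    (hδ0 : ∀ m ≥ 1, 0 ≤ δ m)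
    (hδ1 : δ 1 ≤ 1 / (1 - γ))
    (hrec : ∀ m ≥ 1, δ (m + 1) ≤ δ m - c * (δ m) ^ 2)
    (M : ℕ) :
    ∑ m ∈ Finset.Icc 1 M, δ m ≤ Real.sqrt (M / (c * (1 - γ))) := by
  have h1γ : (0:ℝ) < 1 - γ := by linarith
  -- Step 1: c * ∑ δ² ≤ δ 1 - δ (M+1) ≤ 1/(1-γ)
  have hQ : ∀ N : ℕ, c * ∑ m ∈ Finset.Icc 1 N, (δ m) ^ 2 ≤ δ 1 - δ (N + 1) ∨
      (∑ m ∈ Finset.Icc 1 N, (δ m) ^ 2 = 0 ∧ N = 0) := by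
    intro N
    induction N with
    | zero => right; simp
    | succ n ih =>
      left
      rw [Finset.sum_Icc_succ_top (by omega : 1 ≤ n + 1)]
      have hr := hrec (n + 1) (by omega)
      rcases ih with h | ⟨h, rfl⟩
      · rw [mul_add]; linarith
      · simp [h]; linarith
  have hQle : ∑ m ∈ Finset.Icc 1 M, (δ m) ^ 2 ≤ 1 / (c * (1 - γ)) := by
    rcases hQ M with h | ⟨h, _⟩
    · have hδM : 0 ≤ δ (M + 1) := hδ0 (M + 1) (by omega)
      rw [le_div_iff₀ (by positivity)]
      have h2 : δ 1 * (1 - γ) ≤ 1 := by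
        rw [← le_div_iff₀ h1γ]; exact hδ1
      nlinarith
    · rw [h]; positivity
  -- Step 2: Cauchy-Schwarz
  have hcard : (Finset.Icc 1 M).card = M := by simp
  have hCS := sq_sum_le_card_mul_sum_sq (s := Finset.Icc 1 M) (f := δ)
  rw [hcard] at hCS
  have hS0 : 0 ≤ ∑ m ∈ Finset.Icc 1 M, δ m :=
    Finset.sum_nonneg fun i hi => hδ0 i (Finset.mem_Icc.mp hi).1
  rw [show (M : ℝ) / (c * (1 - γ)) = M * (1 / (c * (1 - γ))) by ring]
  apply (Real.le_sqrt hS0 (by positivity)).mpr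
  calc (∑ m ∈ Finset.Icc 1 M, δ m) ^ 2 ≤ M * ∑ m ∈ Finset.Icc 1 M, (δ m) ^ 2 := hCS
    _ ≤ M * (1 / (c * (1 - γ))) := by
        apply mul_le_mul_of_nonneg_left hQle (Nat.cast_nonneg M)
end

section
/- Fix 0 ≤ γ < 1 and a finite action set A. Let π : A → ℝ be a probability distribution (π(a) ≥ 0, ∑_a π(a) = 1) and Q : A → ℝ with 0 ≤ Q(a) ≤ 1/(1-γ) for all a. Define V = ∑_a π(a)·Q(a) and A(a) = Q(a) - V. Then for every a, |A(a)| ≤ (1/(1-γ))·(1 - π(a)). -/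
theorem stmt_4 {A : Type*} [Fintype A] (γ : ℝ) (hγ0 : 0 ≤ γ) (hγ1 : γ < 1)
    (π Q : A → ℝ)
    (hπ0 : ∀ a, 0 ≤ π a) (hπ1 : ∑ a, π a = 1)
    (hQ0 : ∀ a, 0 ≤ Q a) (hQub : ∀ a, Q a ≤ 1 / (1 - γ)) :
    ∀ a, |Q a - ∑ a', π a' * Q a'| ≤ (1 / (1 - γ)) * (1 - π a) := by
  intro a
  classical
  have hγ : (0:ℝ) < 1 - γ := by linarith
  set M := 1 / (1 - γ) with hMdef
  have hM0 : 0 ≤ M := by positivity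
  have h1 : Q a - ∑ a', π a' * Q a' = ∑ a', π a' * (Q a - Q a') := by
    simp [mul_sub, Finset.sum_sub_distrib, ← Finset.sum_mul, hπ1]
  have habs : ∀ a', |Q a - Q a'| ≤ M := by
    intro a'
    rw [abs_le]
    constructor <;> [linarith [hQ0 a, hQub a']; linarith [hQ0 a', hQub a]]
  have herase : ∑ a' ∈ Finset.univ.erase a, π a' = 1 - π a := by
    have := Finset.add_sum_erase Finset.univ π (Finset.mem_univ a)
    linarith [hπ1 ▸ this]
  calc |Q a - ∑ a', π a' * Q a'| = |∑ a', π a' * (Q a - Q a')| := by rw [h1]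
    _ ≤ ∑ a', |π a' * (Q a - Q a')| := Finset.abs_sum_le_sum_abs _ _
    _ = ∑ a', π a' * |Q a - Q a'| := by
        refine Finset.sum_congr rfl fun a' _ => ?_
        rw [abs_mul, abs_of_nonneg (hπ0 a')]
    _ = π a * |Q a - Q a| + ∑ a' ∈ Finset.univ.erase a, π a' * |Q a - Q a'| :=
        (Finset.add_sum_erase Finset.univ _ (Finset.mem_univ a)).symm
    _ ≤ π a * |Q a - Q a| + ∑ a' ∈ Finset.univ.erase a, π a' * M := by
        have := Finset.sum_le_sum (fun a' (_ : a' ∈ Finset.univ.erase a) =>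
          mul_le_mul_of_nonneg_left (habs a') (hπ0 a'))
        linarith
    _ = (1 - π a) * M := by
        rw [← Finset.sum_mul, herase]; simp
    _ = M * (1 - π a) := mul_comm _ _
end

section
/- Let A be a finite set, θ : A → ℝ, and define the softmax π(a) = exp(θ(a)) / ∑_{a'} exp(θ(a')). Fix a₀ ∈ A with |A| ≥ 2, and define θ'(a₀) = θ(a₀) + log(1/π(a₀)) and θ'(a) = θ(a) for a ≠ a₀, with π' the softmax of θ'. Then π'(a₀) - π(a₀) = (1 - π(a₀))² / (2 - π(a₀)). -/
/-!
Raising the logit of `a₀` by `t` multiplies its weight `exp (θ a₀)` by `exp t` and leaves the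
other weights alone, so the new probability of `a₀` is `eᵗ p / (1 + (eᵗ - 1) p)` with
`p = π a₀`. For the step `t = log (1 / p)` this is `1 / (2 - p)`, and
`1 / (2 - p) - p = (1 - p)² / (2 - p)`.
-/

open Function

noncomputable def softmax {A : Type*} [Fintype A] (θ : A → ℝ) (a : A) : ℝ :=
  Real.exp (θ a) / ∑ a', Real.exp (θ a')

section Softmax

open Real

variable {A : Type*} [Fintype A]

theorem sum_exp_pos (θ : A → ℝ) (a₀ : A) : 0 < ∑ a, exp (θ a) :=
  Finset.sum_pos (fun a _ => exp_pos (θ a)) ⟨a₀, Finset.mem_univ a₀⟩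

theorem exp_le_sum_exp (θ : A → ℝ) (a₀ : A) : exp (θ a₀) ≤ ∑ a, exp (θ a) :=
  Finset.single_le_sum (fun a _ => (exp_pos (θ a)).le) (Finset.mem_univ a₀)

theorem softmax_pos (θ : A → ℝ) (a : A) : 0 < softmax θ a :=
  div_pos (exp_pos _) (sum_exp_pos θ a)

theorem softmax_le_one (θ : A → ℝ) (a : A) : softmax θ a ≤ 1 :=
  div_le_one_of_le₀ (exp_le_sum_exp θ a) (sum_exp_pos θ a).le

theorem sum_exp_update [DecidableEq A] (θ : A → ℝ) (a₀ : A) (x : ℝ) :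
    ∑ a, exp (update θ a₀ x a) = ∑ a, exp (θ a) + (exp x - exp (θ a₀)) := by
  have hexp : (fun a => exp (update θ a₀ x a)) = update (fun a => exp (θ a)) a₀ (exp x) := by
    ext a
    exact apply_update (fun _ => exp) θ a₀ x a
  rw [hexp, Finset.sum_update_of_mem (Finset.mem_univ a₀),
    Finset.sum_eq_add_sum_sdiff_singleton_of_mem (Finset.mem_univ a₀)]
  ring

theorem softmax_update_self_add [DecidableEq A] (θ : A → ℝ) (a₀ : A) (t : ℝ) :
    softmax (update θ a₀ (θ a₀ + t)) a₀
      = exp t * softmax θ a₀ / (1 + (exp t - 1) * softmax θ a₀) := by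
  have hS := sum_exp_pos θ a₀
  have hS' : 0 < ∑ a, exp (θ a) + (exp (θ a₀ + t) - exp (θ a₀)) := by
    linarith [exp_le_sum_exp θ a₀, exp_pos (θ a₀ + t)]
  unfold softmax
  rw [sum_exp_update, update_self, exp_add]
  field_simp

theorem softmax_update_self_add_log_inv [DecidableEq A] (θ : A → ℝ) (a₀ : A) :
    softmax (update θ a₀ (θ a₀ + log (1 / softmax θ a₀))) a₀ = 1 / (2 - softmax θ a₀) := by
  have hp := softmax_pos θ a₀
  rw [softmax_update_self_add, exp_log (by positivity)]
  field_simp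
  ring

end Softmax

theorem stmt_5_general {A : Type*} [Fintype A] (θ θ' π π' : A → ℝ) (a₀ : A)
    (hπ : ∀ a, π a = Real.exp (θ a) / ∑ a', Real.exp (θ a'))
    (hθ'0 : θ' a₀ = θ a₀ + Real.log (1 / π a₀))
    (hθ' : ∀ a ≠ a₀, θ' a = θ a)
    (hπ' : ∀ a, π' a = Real.exp (θ' a) / ∑ a', Real.exp (θ' a')) :
    π' a₀ - π a₀ = (1 - π a₀) ^ 2 / (2 - π a₀) := by
  classical
  have hθ'_eq : θ' = update θ a₀ (θ a₀ + Real.log (1 / π a₀)) := eq_update_iff.2 ⟨hθ'0, hθ'⟩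
  have hπ'0 : π' a₀ = softmax θ' a₀ := hπ' a₀
  obtain rfl : π = softmax θ := funext hπ
  have hp1 := softmax_le_one θ a₀
  rw [hπ'0, hθ'_eq, softmax_update_self_add_log_inv]
  have : 2 - softmax θ a₀ ≠ 0 := by linarith
  field_simp
  ring

theorem stmt_5 {A : Type*} [Fintype A] (θ θ' π π' : A → ℝ) (a₀ : A)
    (hcard : 2 ≤ Fintype.card A)
    (hπ : ∀ a, π a = Real.exp (θ a) / ∑ a', Real.exp (θ a'))
    (hθ'0 : θ' a₀ = θ a₀ + Real.log (1 / π a₀))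
    (hθ' : ∀ a ≠ a₀, θ' a = θ a)
    (hπ' : ∀ a, π' a = Real.exp (θ' a) / ∑ a', Real.exp (θ' a')) :
    π' a₀ - π a₀ = (1 - π a₀) ^ 2 / (2 - π a₀) :=
  stmt_5_general θ θ' π π' a₀ hπ hθ'0 hθ' hπ'
end

section
/- Let A be a finite set, θ : A → ℝ, π the softmax of θ, a₀ ∈ A with π(a₀) < 1, and α ≥ log(1/π(a₀)). Define θ'(a₀) = θ(a₀) + α and θ'(a) = θ(a) for a ≠ a₀, with π' the softmax of θ'. Then W := π'(a₀) - π(a₀) satisfies (1-π(a₀))²/(2-π(a₀)) ≤ W ≤ 1 - π(a₀), and for every a ≠ a₀, π'(a) - π(a) = -(W/(1-π(a₀)))·π(a). -/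
theorem stmt_9 {A : Type*} [Fintype A] (θ θ' π π' : A → ℝ) (a₀ : A) (α : ℝ)
    (hπ : ∀ a, π a = Real.exp (θ a) / ∑ a', Real.exp (θ a'))
    (hπa₀ : π a₀ < 1)
    (hα : α ≥ Real.log (1 / π a₀))
    (hθ'0 : θ' a₀ = θ a₀ + α)
    (hθ' : ∀ a ≠ a₀, θ' a = θ a)
    (hπ' : ∀ a, π' a = Real.exp (θ' a) / ∑ a', Real.exp (θ' a')) :
    (1 - π a₀) ^ 2 / (2 - π a₀) ≤ π' a₀ - π a₀ ∧
    π' a₀ - π a₀ ≤ 1 - π a₀ ∧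
    ∀ a ≠ a₀, π' a - π a = -((π' a₀ - π a₀) / (1 - π a₀)) * π a := by
  classical
  set S := ∑ a', Real.exp (θ a') with hS
  set S' := ∑ a', Real.exp (θ' a') with hS'
  set E := Real.exp (θ a₀) with hE
  set t := Real.exp α with ht
  have hSpos : 0 < S := Finset.sum_pos (fun a _ => Real.exp_pos _) ⟨a₀, Finset.mem_univ a₀⟩
  have hS'pos : 0 < S' := Finset.sum_pos (fun a _ => Real.exp_pos _) ⟨a₀, Finset.mem_univ a₀⟩
  have hEpos : 0 < E := Real.exp_pos _
  have htpos : 0 < t := Real.exp_pos _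
  have hθ'a₀ : Real.exp (θ' a₀) = E * t := by rw [hθ'0, Real.exp_add]
  have hdiff : S' - E * t = S - E := by
    rw [hS, hS', ← Finset.sum_erase_add _ _ (Finset.mem_univ a₀),
        ← Finset.sum_erase_add _ _ (Finset.mem_univ a₀), hθ'a₀]
    simp only [add_sub_cancel_right, hE]
    exact Finset.sum_congr rfl fun a ha => by rw [hθ' a (Finset.ne_of_mem_erase ha)]
  have hS'eq : S' = S - E + E * t := by linarith
  have hp : π a₀ = E / S := hπ a₀
  have hp' : π' a₀ = E * t / S' := by rw [hπ' a₀, hθ'a₀]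
  have hES : E < S := by
    rw [hp, div_lt_one hSpos] at hπa₀; exact hπa₀
  have hppos : 0 < π a₀ := by rw [hp]; positivity
  have htS : S ≤ E * t := by
    have h1 : (1 : ℝ) / π a₀ ≤ t := by
      rw [ht]
      calc 1 / π a₀ = Real.exp (Real.log (1 / π a₀)) := by
            rw [Real.exp_log (by positivity)]
        _ ≤ Real.exp α := Real.exp_le_exp.mpr hα
    rw [hp, one_div_div, div_le_iff₀ hEpos] at h1
    linarith [h1]
  have hEtS' : E * t ≤ S' := by nlinarith
  clear_value S S' E t
  refine ⟨?_, ?_, ?_⟩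
  · -- lower bound
    rw [hp, hp', hS'eq]
    set p := E / S with hpdef
    have hplt : p < 1 := by rw [hpdef, div_lt_one hSpos]; exact hES
    have hppos' : 0 < p := by rw [hpdef]; positivity
    have h2p : (0:ℝ) < 2 - p := by linarith
    have hne : (0:ℝ) < S - E + E * t := by nlinarith
    have hq : 1 / (2 - p) ≤ E * t / (S - E + E * t) := by
      rw [div_le_div_iff₀ h2p hne, hpdef]
      have h2peq : 2 - E / S = (2 * S - E) / S := by field_simp
      rw [h2peq, ← mul_div_assoc, le_div_iff₀ hSpos]
      nlinarith [mul_nonneg (sub_nonneg.mpr htS) (sub_nonneg.mpr hES.le)]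
    have heq : (1 - p) ^ 2 / (2 - p) = 1 / (2 - p) - p := by
      field_simp
      ring
    linarith [hq, heq.le]
  · have : π' a₀ ≤ 1 := by
      rw [hp', div_le_one hS'pos]; exact hEtS'
    linarith
  · intro a ha
    have hπ'a : π' a = Real.exp (θ a) / S' := by rw [hπ' a, hθ' a ha]
    have h1p : (1:ℝ) - π a₀ ≠ 0 := by linarith
    rw [hπ'a, hπ a, hp, hp', hS'eq]
    have hne : (0:ℝ) < S - E + E * t := by nlinarith
    have hSE : (0:ℝ) < S - E := by linarith
    have h1 : (1:ℝ) - E / S = (S - E) / S := by field_simp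
    rw [h1, div_div_eq_mul_div]
    field_simp [ne_of_gt hne, ne_of_gt hSpos, ne_of_gt hSE]
    ring
end

section
/- Let A be a finite set, θ : A → ℝ, π the softmax of θ, a₀ ∈ A with 0 < π(a₀) < 1, and α ≥ log(1/π(a₀)). Define θ'(a₀) = θ(a₀) - α and θ'(a) = θ(a) for a ≠ a₀, with π' the softmax of θ'. Then W := π(a₀) - π'(a₀) satisfies π(a₀)·(1-π(a₀))²/(π(a₀)² - π(a₀) + 1) ≤ W ≤ π(a₀), and for every a ≠ a₀, π'(a) - π(a) = (W/(1-π(a₀)))·π(a). -/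
theorem stmt_10 {A : Type*} [Fintype A] (θ θ' π π' : A → ℝ) (a₀ : A) (α : ℝ)
    (hπ : ∀ a, π a = Real.exp (θ a) / ∑ a', Real.exp (θ a'))
    (hπa₀0 : 0 < π a₀) (hπa₀1 : π a₀ < 1)
    (hα : α ≥ Real.log (1 / π a₀))
    (hθ'0 : θ' a₀ = θ a₀ - α)
    (hθ' : ∀ a ≠ a₀, θ' a = θ a)
    (hπ' : ∀ a, π' a = Real.exp (θ' a) / ∑ a', Real.exp (θ' a')) :
    π a₀ * (1 - π a₀) ^ 2 / ((π a₀) ^ 2 - π a₀ + 1) ≤ π a₀ - π' a₀ ∧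
    π a₀ - π' a₀ ≤ π a₀ ∧
    ∀ a ≠ a₀, π' a - π a = ((π a₀ - π' a₀) / (1 - π a₀)) * π a := by
  have hS0 : 0 < ∑ a', Real.exp (θ a') :=
    Finset.sum_pos (fun a _ => Real.exp_pos _) ⟨a₀, Finset.mem_univ a₀⟩
  set S := ∑ a', Real.exp (θ a') with hS
  set c := Real.exp (-α) with hcdef
  have hc0 : 0 < c := Real.exp_pos _
  set p := π a₀ with hpdef
  have hcp : c ≤ p := by
    have h1 : Real.log (1 / p) = -Real.log p := by rw [one_div, Real.log_inv]
    have h2 : -α ≤ Real.log p := by rw [h1] at hα; linarith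
    calc c = Real.exp (-α) := rfl
      _ ≤ Real.exp (Real.log p) := Real.exp_le_exp.mpr h2
      _ = p := Real.exp_log hπa₀0
  have hEa₀ : Real.exp (θ a₀) = p * S := by
    have h := hπ a₀
    rw [← hpdef] at h
    field_simp at h
    linarith
  have hE'a₀ : Real.exp (θ' a₀) = c * (p * S) := by
    rw [hθ'0, Real.exp_sub, hEa₀, hcdef, Real.exp_neg]
    field_simp
  have hdiff : ∑ a', (Real.exp (θ' a') - Real.exp (θ a')) =
      Real.exp (θ' a₀) - Real.exp (θ a₀) := by
    apply Finset.sum_eq_single a₀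
    · intro b _ hb; rw [hθ' b hb]; ring
    · intro h; exact absurd (Finset.mem_univ a₀) h
  set q := 1 - p + c * p with hqdef
  have hq0 : 0 < q := by nlinarith
  have hS' : ∑ a', Real.exp (θ' a') = S * q := by
    rw [Finset.sum_sub_distrib, ← hS] at hdiff
    rw [hE'a₀, hEa₀] at hdiff
    have : ∑ a', Real.exp (θ' a') = S + (c * (p * S) - p * S) := by linarith
    rw [this, hqdef]; ring
  have hπ'a₀ : π' a₀ = c * p / q := by
    rw [hπ' a₀, hS', hE'a₀]
    field_simp
  have hπ'a : ∀ a ≠ a₀, π' a = π a / q := by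
    intro a ha
    rw [hπ' a, hS', hθ' a ha, hπ a]
    rw [div_div]
  have hW : p - π' a₀ = p * (1 - p) * (1 - c) / q := by
    rw [hπ'a₀]
    field_simp
    ring
  have hden : 0 < p ^ 2 - p + 1 := by nlinarith
  refine ⟨?_, ?_, ?_⟩
  · rw [hW, div_le_div_iff₀ hden hq0, hqdef]
    nlinarith [mul_nonneg (mul_nonneg hπa₀0.le (by linarith : (0:ℝ) ≤ 1 - p))
      (sub_nonneg.mpr hcp)]
  · have : 0 ≤ π' a₀ := by rw [hπ'a₀]; positivity
    linarith
  · intro a ha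
    rw [hπ'a a ha, hπ'a₀]
    have h1p : (1:ℝ) - p ≠ 0 := by linarith
    field_simp
    ring
end

section
/- Let A be a finite set, θ : A → ℝ, π the softmax of θ, and sgn : A → {-1, 0, 1}. Define θ'(a) = θ(a) + sgn(a)·log(1/π(a)) and let π' be the softmax of θ'. Let Z = |{a : sgn(a) = 1}| + ∑_{a : sgn(a)=0} π(a) + ∑_{a : sgn(a)=-1} π(a)². Then π'(a) = 1/Z if sgn(a) = 1, π'(a) = π(a)/Z if sgn(a) = 0, and π'(a) = π(a)²/Z if sgn(a) = -1. -/
theorem stmt_13 {A : Type*} [Fintype A] [DecidableEq A]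
    (θ θ' π π' : A → ℝ) (sgn : A → ℝ)
    (hsgn : ∀ a, sgn a = 1 ∨ sgn a = 0 ∨ sgn a = -1)
    (hπ : ∀ a, π a = Real.exp (θ a) / ∑ a', Real.exp (θ a'))
    (hθ' : ∀ a, θ' a = θ a + sgn a * Real.log (1 / π a))
    (hπ' : ∀ a, π' a = Real.exp (θ' a) / ∑ a', Real.exp (θ' a'))
    (Z : ℝ)
    (hZ : Z = ((Finset.univ.filter (fun a => sgn a = 1)).card : ℝ)
        + ∑ a ∈ Finset.univ.filter (fun a => sgn a = 0), π a
        + ∑ a ∈ Finset.univ.filter (fun a => sgn a = -1), (π a) ^ 2) :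
    ∀ a, (sgn a = 1 → π' a = 1 / Z) ∧
         (sgn a = 0 → π' a = π a / Z) ∧
         (sgn a = -1 → π' a = (π a) ^ 2 / Z) := by
  intro a
  have hS : (0:ℝ) < ∑ a', Real.exp (θ a') :=
    Finset.sum_pos (fun i _ => Real.exp_pos _) ⟨a, Finset.mem_univ a⟩
  set S := ∑ a', Real.exp (θ a') with hSdef
  have hπpos : ∀ b, 0 < π b := fun b => by
    rw [hπ]; positivity
  have hexp : ∀ b, Real.exp (θ b) = π b * S := fun b => by
    rw [hπ]; field_simp
  set f : A → ℝ := fun b => if sgn b = 1 then 1 else if sgn b = 0 then π b else (π b)^2 with hf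
  have hf1 : ∀ b, sgn b = 1 → f b = 1 := by
    intro b h; simp only [hf]; rw [if_pos h]
  have hf0 : ∀ b, sgn b = 0 → f b = π b := by
    intro b h; simp only [hf]
    rw [if_neg (by rw [h]; norm_num), if_pos h]
  have hfm : ∀ b, sgn b = -1 → f b = (π b) ^ 2 := by
    intro b h; simp only [hf]
    rw [if_neg (by rw [h]; norm_num), if_neg (by rw [h]; norm_num)]
  have key : ∀ b, Real.exp (θ' b) = f b * S := by
    intro b
    have hlog : Real.exp (Real.log (1 / π b)) = 1 / π b :=
      Real.exp_log (by have := hπpos b; positivity)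
    rw [hθ' b, Real.exp_add]
    rcases hsgn b with h|h|h
    · rw [hf1 b h, h, one_mul, hlog, hexp b, one_mul]
      rw [mul_one_div]
      exact mul_div_cancel_left₀ S (hπpos b).ne'
    · rw [hf0 b h, h, zero_mul, Real.exp_zero, mul_one, hexp b]
    · rw [hfm b h, h, neg_one_mul, Real.exp_neg, hlog, hexp b]
      have hb := (hπpos b).ne'
      rw [one_div, inv_inv]
      ring
  have hsum : ∑ b, Real.exp (θ' b) = Z * S := by
    have h1 : ∑ b, Real.exp (θ' b) = (∑ b, f b) * S := by
      rw [Finset.sum_mul]; exact Finset.sum_congr rfl (fun b _ => key b)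
    rw [h1]
    congr 1
    have split1 := Finset.sum_filter_add_sum_filter_not Finset.univ (fun b => sgn b = 1) f
    have split2 := Finset.sum_filter_add_sum_filter_not
      (Finset.univ.filter (fun b => ¬ sgn b = 1)) (fun b => sgn b = 0) f
    rw [Finset.filter_filter, Finset.filter_filter] at split2
    have hset0 : Finset.univ.filter (fun b => ¬sgn b = 1 ∧ sgn b = 0)
        = Finset.univ.filter (fun b => sgn b = 0) := by
      apply Finset.filter_congr
      intro b _
      constructor
      · exact fun hb => hb.2
      · exact fun hb => ⟨by rw [hb]; norm_num, hb⟩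
    have hsetm : Finset.univ.filter (fun b => ¬sgn b = 1 ∧ ¬sgn b = 0)
        = Finset.univ.filter (fun b => sgn b = -1) := by
      apply Finset.filter_congr
      intro b _
      constructor
      · intro hb
        rcases hsgn b with h|h|h
        · exact absurd h hb.1
        · exact absurd h hb.2
        · exact h
      · exact fun hb => ⟨by rw [hb]; norm_num, by rw [hb]; norm_num⟩
    rw [hset0, hsetm] at split2
    have e1 : ∑ b ∈ Finset.univ.filter (fun b => sgn b = 1), f b
        = ((Finset.univ.filter (fun b => sgn b = 1)).card : ℝ) := by
      rw [Finset.sum_congr rfl (fun b hb => hf1 b (Finset.mem_filter.mp hb).2),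
        Finset.sum_const, nsmul_eq_mul, mul_one]
    have e0 : ∑ b ∈ Finset.univ.filter (fun b => sgn b = 0), f b
        = ∑ b ∈ Finset.univ.filter (fun b => sgn b = 0), π b :=
      Finset.sum_congr rfl (fun b hb => hf0 b (Finset.mem_filter.mp hb).2)
    have em : ∑ b ∈ Finset.univ.filter (fun b => sgn b = -1), f b
        = ∑ b ∈ Finset.univ.filter (fun b => sgn b = -1), (π b) ^ 2 :=
      Finset.sum_congr rfl (fun b hb => hfm b (Finset.mem_filter.mp hb).2)
    rw [hZ, ← e1, ← e0, ← em, ← split1, ← split2]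
    ring
  have hfin : π' a = f a / Z := by
    rw [hπ' a, hsum, key a, mul_div_mul_right _ _ hS.ne']
  exact ⟨fun h => by rw [hfin, hf1 a h], fun h => by rw [hfin, hf0 a h],
    fun h => by rw [hfin, hfm a h]⟩
end

section
/- Let A be a finite set with softmax distribution π of θ : A → ℝ, partitioned by sgn : A → {-1,0,1}, updated to π' as in the batch CAPO update (π'(a) equals 1/Z, π(a)/Z, or π(a)²/Z according to sgn(a) = 1, 0, -1, where Z = |{sgn=1}| + ∑_{sgn=0} π(a) + ∑_{sgn=-1} π(a)²). Let Adv : A → ℝ satisfy ∑_a π(a)·Adv(a) = 0, Adv(a) > 0 iff sgn(a) = 1, Adv(a) = 0 iff sgn(a) = 0, Adv(a) < 0 iff sgn(a) = -1, and |Adv(a)| ≤ C·(1-π(a)) for all a, where C > 0. Then ∑_a π'(a)·Adv(a) ≥ (1/(C·|A|))·∑_{a : sgn(a)=1} Adv(a)². -/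
theorem stmt_14 {A : Type*} [Fintype A] [DecidableEq A]
    (π π' Adv : A → ℝ) (sgn : A → ℝ) (C : ℝ) (Z : ℝ)
    (hπ0 : ∀ a, 0 ≤ π a) (hπ1 : ∑ a, π a = 1)
    (hsgn : ∀ a, sgn a = 1 ∨ sgn a = 0 ∨ sgn a = -1)
    (hZ : Z = ((Finset.univ.filter (fun a => sgn a = 1)).card : ℝ)
        + ∑ a ∈ Finset.univ.filter (fun a => sgn a = 0), π a
        + ∑ a ∈ Finset.univ.filter (fun a => sgn a = -1), (π a) ^ 2)
    (hπ'pos : ∀ a, sgn a = 1 → π' a = 1 / Z)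
    (hπ'zero : ∀ a, sgn a = 0 → π' a = π a / Z)
    (hπ'neg : ∀ a, sgn a = -1 → π' a = (π a) ^ 2 / Z)
    (hmean : ∑ a, π a * Adv a = 0)
    (hpos : ∀ a, Adv a > 0 ↔ sgn a = 1)
    (hzero : ∀ a, Adv a = 0 ↔ sgn a = 0)
    (hneg : ∀ a, Adv a < 0 ↔ sgn a = -1)
    (hC : C > 0)
    (hbound : ∀ a, |Adv a| ≤ C * (1 - π a)) :
    ∑ a, π' a * Adv a ≥
      (1 / (C * Fintype.card A)) *
        ∑ a ∈ Finset.univ.filter (fun a => sgn a = 1), (Adv a) ^ 2 := by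
  classical
  set S1 := Finset.univ.filter (fun a => sgn a = 1) with hS1
  set S0 := Finset.univ.filter (fun a => sgn a = 0) with hS0def
  set Sm := Finset.univ.filter (fun a => sgn a = -1) with hSmdef
  -- generic splitting of a sum over univ
  have hsplit : ∀ f : A → ℝ,
      ∑ a, f a = ∑ a ∈ S1, f a + ∑ a ∈ S0, f a + ∑ a ∈ Sm, f a := by
    intro f
    rw [← Finset.sum_filter_add_sum_filter_not Finset.univ (fun a => sgn a = 1) f,
        ← Finset.sum_filter_add_sum_filter_not
          (Finset.univ.filter (fun a => ¬ sgn a = 1)) (fun a => sgn a = 0) f,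
        Finset.filter_filter, Finset.filter_filter, add_assoc]
    congr 2
    · apply Finset.sum_congr _ (fun _ _ => rfl)
      ext a
      simp only [Finset.mem_filter, Finset.mem_univ, true_and, hS0def]
      constructor
      · rintro ⟨_, h⟩; exact h
      · intro h; exact ⟨by rw [h]; norm_num, h⟩
    · apply Finset.sum_congr _ (fun _ _ => rfl)
      ext a
      simp only [Finset.mem_filter, Finset.mem_univ, true_and, hSmdef]
      constructor
      · rintro ⟨h1, h0⟩
        rcases hsgn a with h | h | h
        · exact absurd h h1
        · exact absurd h h0
        · exact h
      · intro h
        constructor <;> rw [h] <;> norm_num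
  have hπle1 : ∀ a, π a ≤ 1 := by
    intro a
    rw [← hπ1]
    exact Finset.single_le_sum (fun b _ => hπ0 b) (Finset.mem_univ a)
  -- card bound
  have hcard : ((Fintype.card A : ℝ)) = S1.card + S0.card + Sm.card := by
    have := hsplit (fun _ => (1 : ℝ))
    simpa [Finset.card_univ, mul_comm] using this
  have hZle : Z ≤ (Fintype.card A : ℝ) := by
    have h0 : ∑ a ∈ S0, π a ≤ (S0.card : ℝ) := by
      calc ∑ a ∈ S0, π a ≤ ∑ a ∈ S0, (1 : ℝ) :=
            Finset.sum_le_sum (fun a _ => hπle1 a)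
        _ = (S0.card : ℝ) := by simp
    have hm : ∑ a ∈ Sm, (π a) ^ 2 ≤ (Sm.card : ℝ) := by
      calc ∑ a ∈ Sm, (π a) ^ 2 ≤ ∑ a ∈ Sm, (1 : ℝ) := by
            apply Finset.sum_le_sum
            intro a _
            nlinarith [hπ0 a, hπle1 a]
        _ = (Sm.card : ℝ) := by simp
    rw [hZ, hcard]
    linarith
  have hZ0 : 0 ≤ Z := by
    rw [hZ]
    have h1 : (0:ℝ) ≤ (S1.card : ℝ) := by positivity
    have h2 : (0:ℝ) ≤ ∑ a ∈ S0, π a := Finset.sum_nonneg fun a _ => hπ0 a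
    have h3 : (0:ℝ) ≤ ∑ a ∈ Sm, (π a) ^ 2 := Finset.sum_nonneg fun a _ => sq_nonneg _
    linarith
  -- rewrite LHS
  have hS0zero : ∑ a ∈ S0, π' a * Adv a = 0 := by
    apply Finset.sum_eq_zero
    intro a ha
    have hs : sgn a = 0 := (Finset.mem_filter.mp ha).2
    rw [(hzero a).mpr hs, mul_zero]
  have hLHS : ∑ a, π' a * Adv a
      = (1/Z) * (∑ a ∈ S1, Adv a + ∑ a ∈ Sm, (π a) ^ 2 * Adv a) := by
    rw [hsplit (fun a => π' a * Adv a), hS0zero, add_zero]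
    have e1 : ∑ a ∈ S1, π' a * Adv a = (1/Z) * ∑ a ∈ S1, Adv a := by
      rw [Finset.mul_sum]
      apply Finset.sum_congr rfl
      intro a ha
      rw [hπ'pos a (Finset.mem_filter.mp ha).2]
    have e2 : ∑ a ∈ Sm, π' a * Adv a = (1/Z) * ∑ a ∈ Sm, (π a) ^ 2 * Adv a := by
      rw [Finset.mul_sum]
      apply Finset.sum_congr rfl
      intro a ha
      rw [hπ'neg a (Finset.mem_filter.mp ha).2]
      ring
    rw [e1, e2, mul_add]
  -- mean zero split
  have hmean' : ∑ a ∈ S1, π a * Adv a + ∑ a ∈ Sm, π a * Adv a = 0 := by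
    have := hsplit (fun a => π a * Adv a)
    have h0 : ∑ a ∈ S0, π a * Adv a = 0 := by
      apply Finset.sum_eq_zero
      intro a ha
      rw [(hzero a).mpr (Finset.mem_filter.mp ha).2, mul_zero]
    rw [this, h0] at hmean
    linarith
  -- key comparisons
  have hNeg : ∑ a ∈ Sm, π a * Adv a ≤ ∑ a ∈ Sm, (π a) ^ 2 * Adv a := by
    apply Finset.sum_le_sum
    intro a ha
    have hs : Adv a < 0 := (hneg a).mpr (Finset.mem_filter.mp ha).2
    nlinarith [mul_nonneg (mul_nonneg (hπ0 a) (neg_nonneg.mpr hs.le))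
      (sub_nonneg.mpr (hπle1 a))]
  have hKey : (1/C) * ∑ a ∈ S1, (Adv a) ^ 2
      ≤ ∑ a ∈ S1, Adv a - ∑ a ∈ S1, π a * Adv a := by
    rw [← Finset.sum_sub_distrib, Finset.mul_sum]
    apply Finset.sum_le_sum
    intro a ha
    have hs : Adv a > 0 := (hpos a).mpr (Finset.mem_filter.mp ha).2
    have hb := hbound a
    rw [abs_of_pos hs] at hb
    have key : Adv a ^ 2 / C ≤ (1 - π a) * Adv a := by
      rw [div_le_iff₀ hC]
      nlinarith [mul_le_mul_of_nonneg_right hb hs.le]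
    have e : Adv a ^ 2 / C = 1 / C * Adv a ^ 2 := by ring
    rw [e] at key
    nlinarith [key]
  have hAdvSq : (0:ℝ) ≤ ∑ a ∈ S1, (Adv a) ^ 2 :=
    Finset.sum_nonneg fun a _ => sq_nonneg _
  by_cases hE : S1 = ∅
  · -- empty positive set: both sides are 0
    have hRHS : ∑ a ∈ S1, (Adv a) ^ 2 = 0 := by rw [hE]; simp
    rw [hLHS, hRHS, mul_zero]
    have hπSm : ∀ a ∈ Sm, π a = 0 := by
      intro a ha
      have hsum : ∑ a ∈ Sm, π a * Adv a = 0 := by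
        rw [hE] at hmean'; simpa using hmean'
      have hterm : ∀ b ∈ Sm, π b * Adv b ≤ 0 := by
        intro b hb
        have : Adv b < 0 := (hneg b).mpr (Finset.mem_filter.mp hb).2
        exact mul_nonpos_of_nonneg_of_nonpos (hπ0 b) this.le
      have := (Finset.sum_eq_zero_iff_of_nonpos hterm).mp hsum a ha
      have hA : Adv a < 0 := (hneg a).mpr (Finset.mem_filter.mp ha).2
      rcases mul_eq_zero.mp this with h | h
      · exact h
      · exact absurd h hA.ne
    have : ∑ a ∈ Sm, (π a) ^ 2 * Adv a = 0 := by
      apply Finset.sum_eq_zero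
      intro a ha
      rw [hπSm a ha]; ring
    rw [hE, this]; simp
  · -- S1 nonempty: Z ≥ 1
    have hcard1 : (1:ℝ) ≤ (S1.card : ℝ) := by
      have : 1 ≤ S1.card := Finset.card_pos.mpr (Finset.nonempty_of_ne_empty hE)
      exact_mod_cast this
    have hZ1 : (1:ℝ) ≤ Z := by
      rw [hZ]
      have h2 : (0:ℝ) ≤ ∑ a ∈ S0, π a := Finset.sum_nonneg fun a _ => hπ0 a
      have h3 : (0:ℝ) ≤ ∑ a ∈ Sm, (π a) ^ 2 := Finset.sum_nonneg fun a _ => sq_nonneg _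
      linarith
    have hZpos : 0 < Z := lt_of_lt_of_le one_pos hZ1
    have hcardpos : (0:ℝ) < (Fintype.card A : ℝ) := lt_of_lt_of_le (lt_of_lt_of_le one_pos hZ1) hZle
    rw [hLHS]
    have step1 : (1/Z) * ((1/C) * ∑ a ∈ S1, (Adv a) ^ 2)
        ≤ (1/Z) * (∑ a ∈ S1, Adv a + ∑ a ∈ Sm, (π a) ^ 2 * Adv a) := by
      apply mul_le_mul_of_nonneg_left _ (by positivity)
      linarith
    have step2 : (1 / (C * (Fintype.card A : ℝ))) * ∑ a ∈ S1, (Adv a) ^ 2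
        ≤ (1/Z) * ((1/C) * ∑ a ∈ S1, (Adv a) ^ 2) := by
      rw [← mul_assoc]
      apply mul_le_mul_of_nonneg_right _ hAdvSq
      rw [one_div, one_div, one_div, ← mul_inv]
      apply inv_anti₀ (by positivity)
      calc Z * C ≤ (Fintype.card A : ℝ) * C :=
            mul_le_mul_of_nonneg_right hZle hC.le
        _ = C * (Fintype.card A : ℝ) := mul_comm _ _
    linarith
end

section
/- Let S be a finite state space with probability distribution ρ over S, let V*, V : S → ℝ with V*(s) ≥ V(s) for all s, and let μ be a probability distribution on S with μ(s) > 0 for all s. Suppose there exist nonnegative weights d*_s(s') (a probability distribution over s' for each s) such that V*(s) - V(s) = (1/(1-γ))·∑_{s'} d*_s(s')·g(s') for some nonnegative function g : S → ℝ, and that d*_μ(s') := ∑_s μ(s)·d*_s(s') ≥ (1-γ)·μ(s') for all s'. Then ∑_s ρ(s)·(V*(s) - V(s)) ≤ (1/(1-γ))·max_s (1/μ(s)) · ∑_s μ(s)·(V*(s) - V(s)). -/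
theorem stmt_15 {S : Type*} [Fintype S] [Nonempty S]
    (γ : ℝ) (hγ0 : 0 ≤ γ) (hγ1 : γ < 1)
    (ρ μ Vstar V g : S → ℝ) (dstar : S → S → ℝ)
    (hρ0 : ∀ s, 0 ≤ ρ s) (hρ1 : ∑ s, ρ s = 1)
    (hμ0 : ∀ s, 0 < μ s) (hμ1 : ∑ s, μ s = 1)
    (hVV : ∀ s, V s ≤ Vstar s)
    (hd0 : ∀ s s', 0 ≤ dstar s s') (hd1 : ∀ s, ∑ s', dstar s s' = 1)
    (hg0 : ∀ s', 0 ≤ g s')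
    (hrep : ∀ s, Vstar s - V s = (1 / (1 - γ)) * ∑ s', dstar s s' * g s')
    (hdμ : ∀ s', (1 - γ) * μ s' ≤ ∑ s, μ s * dstar s s') :
    ∑ s, ρ s * (Vstar s - V s) ≤
      (1 / (1 - γ)) * (Finset.univ.sup' Finset.univ_nonempty (fun s => 1 / μ s)) *
        ∑ s, μ s * (Vstar s - V s) := by
  set C := Finset.univ.sup' Finset.univ_nonempty (fun s => 1 / μ s) with hC
  have hγ' : (0:ℝ) < 1 - γ := by linarith
  have hCle : ∀ s, ρ s ≤ C * μ s := by
    intro s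
    have h1 : ρ s ≤ 1 := by
      have := Finset.single_le_sum (f := ρ) (fun i _ => hρ0 i) (Finset.mem_univ s)
      linarith [hρ1 ▸ this]
    have h2 : 1 / μ s ≤ C := Finset.le_sup' (fun s => 1 / μ s) (Finset.mem_univ s)
    have h3 : (1 / μ s) * μ s ≤ C * μ s :=
      mul_le_mul_of_nonneg_right h2 (hμ0 s).le
    rw [one_div, inv_mul_cancel₀ (hμ0 s).ne'] at h3
    linarith
  have hstep : ∑ s, ρ s * (Vstar s - V s) ≤ C * ∑ s, μ s * (Vstar s - V s) := by
    rw [Finset.mul_sum]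
    apply Finset.sum_le_sum
    intro s _
    have hv : 0 ≤ Vstar s - V s := by linarith [hVV s]
    calc ρ s * (Vstar s - V s) ≤ (C * μ s) * (Vstar s - V s) :=
          mul_le_mul_of_nonneg_right (hCle s) hv
      _ = C * (μ s * (Vstar s - V s)) := by ring
  have hCpos : 0 < C := by
    obtain ⟨s⟩ := ‹Nonempty S›
    exact lt_of_lt_of_le (by have := hμ0 s; positivity : (0:ℝ) < 1 / μ s)
      (Finset.le_sup' (fun s => 1 / μ s) (Finset.mem_univ s))
  have hsum0 : 0 ≤ ∑ s, μ s * (Vstar s - V s) :=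
    Finset.sum_nonneg fun s _ => mul_nonneg (hμ0 s).le (by linarith [hVV s])
  have hfac : 1 ≤ 1 / (1 - γ) := by
    rw [le_div_iff₀ hγ']; linarith
  have : C * ∑ s, μ s * (Vstar s - V s) ≤ (1 / (1 - γ)) * C * ∑ s, μ s * (Vstar s - V s) := by
    have := mul_le_mul_of_nonneg_right
      (mul_le_mul_of_nonneg_right hfac hCpos.le) hsum0
    simpa [one_mul] using this
  linarith
end
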